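/- arXiv:1603.02553 — 5 statements merged into one kernel-verified Lean document; each statement's English description precedes it below -/
import Mathlib

section
/- Let C1, C2, C3 be independent uniform random bits and define A = C1, X = C1 ⊕ C2, Y = C2 ⊕ C3, B = C3 (⊕ denoting addition mod 2). Then each of A, X, Y, B has entropy log 2, every pair has joint entropy 2 log 2, every triple has joint entropy 3 log 2, and H(A,X,Y,B) = 3 log 2. -/
open Real BigOperators Finset

/-- Probability that random variable `X` takes value `x`, under pmf `p` on a finite sample space. -/
noncomputable def pr {Ω α : Type*} [Fintype Ω] [DecidableEq α]
    (p : Ω → ℝ) (X : Ω → α) (x : α) : ℝ :=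
  ∑ ω, if X ω = x then p ω else 0

/-- Shannon entropy (natural log) of a finite random variable. -/
noncomputable def ent {Ω α : Type*} [Fintype Ω] [Fintype α] [DecidableEq α]
    (p : Ω → ℝ) (X : Ω → α) : ℝ :=
  -∑ x, pr p X x * Real.log (pr p X x)

/-- Mutual information I(X:Y) = H(X)+H(Y)-H(XY). -/
noncomputable def mi {Ω α β : Type*} [Fintype Ω] [Fintype α] [Fintype β]
    [DecidableEq α] [DecidableEq β] (p : Ω → ℝ) (X : Ω → α) (Y : Ω → β) : ℝ :=
  ent p X + ent p Y - ent p (fun ω => (X ω, Y ω))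

/-- Conditional mutual information I(X:Y|Z) = H(XZ)+H(YZ)-H(XYZ)-H(Z). -/
noncomputable def cmi {Ω α β γ : Type*} [Fintype Ω] [Fintype α] [Fintype β] [Fintype γ]
    [DecidableEq α] [DecidableEq β] [DecidableEq γ]
    (p : Ω → ℝ) (X : Ω → α) (Y : Ω → β) (Z : Ω → γ) : ℝ :=
  ent p (fun ω => (X ω, Z ω)) + ent p (fun ω => (Y ω, Z ω))
    - ent p (fun ω => (X ω, Y ω, Z ω)) - ent p Z

/-- Uniform pmf on three bits. -/
noncomputable def p3 : Bool × Bool × Bool → ℝ := fun _ => 1 / 8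

def A3 (ω : Bool × Bool × Bool) : Bool := ω.1
def X3 (ω : Bool × Bool × Bool) : Bool := xor ω.1 ω.2.1
def Y3 (ω : Bool × Bool × Bool) : Bool := xor ω.2.1 ω.2.2
def B3 (ω : Bool × Bool × Bool) : Bool := ω.2.2

/-- For A = C1, X = C1⊕C2, Y = C2⊕C3, B = C3 with C1,C2,C3 i.i.d. uniform bits:
all singles have entropy log 2, all pairs 2 log 2, all triples 3 log 2,
and the total entropy is 3 log 2. -/
theorem p4_extremal_ray_i :
    ent p3 A3 = Real.log 2 ∧ ent p3 X3 = Real.log 2 ∧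
    ent p3 Y3 = Real.log 2 ∧ ent p3 B3 = Real.log 2 ∧
    ent p3 (fun ω => (A3 ω, X3 ω)) = 2 * Real.log 2 ∧
    ent p3 (fun ω => (A3 ω, Y3 ω)) = 2 * Real.log 2 ∧
    ent p3 (fun ω => (A3 ω, B3 ω)) = 2 * Real.log 2 ∧
    ent p3 (fun ω => (X3 ω, Y3 ω)) = 2 * Real.log 2 ∧
    ent p3 (fun ω => (X3 ω, B3 ω)) = 2 * Real.log 2 ∧
    ent p3 (fun ω => (Y3 ω, B3 ω)) = 2 * Real.log 2 ∧
    ent p3 (fun ω => (A3 ω, X3 ω, Y3 ω)) = 3 * Real.log 2 ∧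
    ent p3 (fun ω => (A3 ω, X3 ω, B3 ω)) = 3 * Real.log 2 ∧
    ent p3 (fun ω => (A3 ω, Y3 ω, B3 ω)) = 3 * Real.log 2 ∧
    ent p3 (fun ω => (X3 ω, Y3 ω, B3 ω)) = 3 * Real.log 2 ∧
    ent p3 (fun ω => (A3 ω, X3 ω, Y3 ω, B3 ω)) = 3 * Real.log 2 := by
  refine ⟨?_, ?_, ?_, ?_, ?_, ?_, ?_, ?_, ?_, ?_, ?_, ?_, ?_, ?_, ?_⟩ <;>
  · simp [ent, pr, p3, A3, X3, Y3, B3, Fintype.sum_prod_type, Fintype.sum_bool]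
    norm_num
    simp only [show ((1:ℝ)/2) = 2^(-1:ℤ) by norm_num, show ((1:ℝ)/4) = 2^(-2:ℤ) by norm_num,
      show ((8:ℝ)) = 2^(3:ℤ) by norm_num, Real.log_zpow]
    push_cast
    ring
end

section
/- There exist random variables A, X, Y, B, each uniform on {0,1}, such that A is independent of (Y,B) and (A,X) is independent of B, with H(A,X,Y,B) = 3 log 2 (e.g., the XOR construction from three shared uniform bits); hence the independence constraints do not force H(A,X,Y,B) = 4 log 2. -/
open Real BigOperators Finset

/-- There exist random variables A, X, Y, B, each uniform on {0,1}, with A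
independent of (Y,B) and (A,X) independent of B, such that H(A,X,Y,B) = 3 log 2;
hence the independence constraints do not force H(A,X,Y,B) = 4 log 2. -/
theorem exists_indep_uniform_with_joint_entropy_three_log_two :
    ∃ (p : Bool × Bool × Bool → ℝ) (A X Y B : Bool × Bool × Bool → Bool),
      (∀ ω, 0 ≤ p ω) ∧ (∑ ω, p ω = 1) ∧
      (∀ v, pr p A v = 1 / 2) ∧ (∀ v, pr p X v = 1 / 2) ∧
      (∀ v, pr p Y v = 1 / 2) ∧ (∀ v, pr p B v = 1 / 2) ∧
      (∀ (a : Bool) (yb : Bool × Bool),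
        pr p (fun ω => (A ω, (Y ω, B ω))) (a, yb) =
          pr p A a * pr p (fun ω => (Y ω, B ω)) yb) ∧
      (∀ (ax : Bool × Bool) (b : Bool),
        pr p (fun ω => ((A ω, X ω), B ω)) (ax, b) =
          pr p (fun ω => (A ω, X ω)) ax * pr p B b) ∧
      ent p (fun ω => (A ω, X ω, Y ω, B ω)) = 3 * Real.log 2 := by

  refine ⟨fun _ => 1/8, fun ω => ω.1, fun ω => xor ω.1 ω.2.1,
    fun ω => xor ω.2.1 ω.2.2, fun ω => ω.2.2, ?_, ?_, ?_, ?_, ?_, ?_, ?_, ?_, ?_⟩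
  · intro ω; norm_num
  · norm_num [Fintype.sum_prod_type]
  · intro v; cases v <;> norm_num [pr, Fintype.sum_prod_type]
  · intro v; cases v <;> norm_num [pr, Fintype.sum_prod_type]
  · intro v; cases v <;> norm_num [pr, Fintype.sum_prod_type]
  · intro v; cases v <;> norm_num [pr, Fintype.sum_prod_type]
  · rintro a ⟨y, b⟩; cases a <;> cases y <;> cases b <;>
      norm_num [pr, Fintype.sum_prod_type]
  · rintro ⟨a, x⟩ b; cases a <;> cases x <;> cases b <;>
      norm_num [pr, Fintype.sum_prod_type]
  · have h : ∀ v : Bool × Bool × Bool × Bool,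
        pr (fun _ : Bool × Bool × Bool => (1:ℝ)/8)
          (fun ω => (ω.1, xor ω.1 ω.2.1, xor ω.2.1 ω.2.2, ω.2.2)) v
        = if v.2.2.1 = xor (xor v.1 v.2.1) v.2.2.2 then 1/8 else 0 := by
      rintro ⟨a, x, y, b⟩
      cases a <;> cases x <;> cases y <;> cases b <;>
        norm_num [pr, Fintype.sum_prod_type]
    rw [ent]
    rw [Fintype.sum_congr _ _ (fun v => by rw [h v])]
    rw [Fintype.sum_prod_type]
    norm_num [Fintype.sum_prod_type]
    rw [show ((1:ℝ)/8) = 2^(-3:ℤ) by norm_num]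
    rw [Real.log_zpow]
    ring
end

section
/- Let C1, ..., C_{n-1} be i.i.d. uniform bits and, for fixed 1 ≤ i < j ≤ n, define X_i = C_i, X_k = C_{k-1} ⊕ C_k for i < k < j, X_j = C_{j-1}, and X_k = 1 for k < i or k > j. Then H(X_1,...,X_n) = (j - i) log 2, and removing any single variable X_k with i ≤ k ≤ j from the joint leaves the entropy unchanged: H of the remaining n-1 variables is still (j-i) log 2. -/
open Real BigOperators Finset

/-- Uniform pmf on `n` bits. -/
noncomputable def pUnif (n : ℕ) : (Fin n → Bool) → ℝ := fun _ => ((2 : ℝ) ^ n)⁻¹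

/-- The `k`-th shared bit `C_k` (for `k < n`; junk value otherwise). -/
def bitv (n : ℕ) (k : ℕ) (ω : Fin n → Bool) : Bool :=
  if h : k < n then ω ⟨k, h⟩ else true

/-- The variables of the distribution `D_{i,j}`: `X_i = C_i`,
`X_k = C_{k-1} ⊕ C_k` for `i < k < j`, `X_j = C_{j-1}`, and `X_k = 1`
(constant) for `k < i` or `k > j`. -/
def Xv (n i j : ℕ) (k : ℕ) (ω : Fin n → Bool) : Bool :=
  if k < i ∨ j < k then true
  else if k = i then bitv n i ω
  else if k = j then bitv n (j - 1) ω
  else xor (bitv n (k - 1) ω) (bitv n k ω)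

/-! ### Auxiliary lemmas -/

lemma pr_comp_inj {Ω α β : Type*} [Fintype Ω] [DecidableEq α] [DecidableEq β]
    (p : Ω → ℝ) (X : Ω → α) {g : α → β} (hg : Function.Injective g) (x : α) :
    pr p (fun ω => g (X ω)) (g x) = pr p X x := by
  unfold pr; simp [hg.eq_iff]

lemma pr_comp_not_mem {Ω α β : Type*} [Fintype Ω] [DecidableEq α] [DecidableEq β]
    (p : Ω → ℝ) (X : Ω → α) (g : α → β) (y : β) (hy : ∀ x, g x ≠ y) :
    pr p (fun ω => g (X ω)) y = 0 := by
  unfold pr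
  apply Finset.sum_eq_zero
  intro ω _
  simp [hy (X ω)]

lemma ent_comp_inj {Ω α β : Type*} [Fintype Ω] [Fintype α] [Fintype β]
    [DecidableEq α] [DecidableEq β]
    (p : Ω → ℝ) (X : Ω → α) {g : α → β} (hg : Function.Injective g) :
    ent p (fun ω => g (X ω)) = ent p X := by
  unfold ent
  congr 1
  have h1 : ∑ y : β, pr p (fun ω => g (X ω)) y * Real.log (pr p (fun ω => g (X ω)) y)
      = ∑ y ∈ Finset.univ.image g,
          pr p (fun ω => g (X ω)) y * Real.log (pr p (fun ω => g (X ω)) y) := by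
    symm
    apply Finset.sum_subset (Finset.subset_univ _)
    intro y _ hy
    have hy' : ∀ x, g x ≠ y := by
      intro x hx
      exact hy (Finset.mem_image.mpr ⟨x, Finset.mem_univ x, hx⟩)
    rw [pr_comp_not_mem p X g y hy']
    simp
  rw [h1, Finset.sum_image (fun a _ b _ h => hg h)]
  exact Finset.sum_congr rfl fun x _ => by rw [pr_comp_inj p X hg]

lemma ent_unif_bits {Ω : Type*} [Fintype Ω] {r : ℕ} (p : Ω → ℝ) (Y : Ω → (Fin r → Bool))
    (h : ∀ v, pr p Y v = ((2:ℝ)^r)⁻¹) : ent p Y = (r : ℝ) * Real.log 2 := by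
  unfold ent
  simp only [h]
  rw [Finset.sum_const, Finset.card_univ]
  simp only [Fintype.card_fun, Fintype.card_bool, Fintype.card_fin]
  rw [Real.log_inv, Real.log_pow]
  have h2 : ((2:ℝ)^r) ≠ 0 := by positivity
  rw [nsmul_eq_mul]
  push_cast
  field_simp

lemma pr_proj (n i j : ℕ) (hij : i < j) (hj : j ≤ n) (v : Fin (j - i) → Bool) :
    pr (pUnif n) (fun ω (t : Fin (j - i)) => ω ⟨i + t.val, by omega⟩) v
      = ((2:ℝ)^(j-i))⁻¹ := by
  set Y : (Fin n → Bool) → (Fin (j - i) → Bool) :=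
    fun ω (t : Fin (j - i)) => ω ⟨i + t.val, by omega⟩ with hY
  have key : ∀ v w : Fin (j - i) → Bool, pr (pUnif n) Y v = pr (pUnif n) Y w := by
    intro v w
    set pat : Fin n → Bool := fun k =>
      if h : i ≤ k.val ∧ k.val < j then
        xor (v ⟨k.val - i, by omega⟩) (w ⟨k.val - i, by omega⟩) else false with hpat
    set E : (Fin n → Bool) → (Fin n → Bool) := fun ω k => xor (ω k) (pat k) with hE
    have hinv : ∀ ω, E (E ω) = ω := by
      intro ω; funext k; simp [hE, Bool.xor_assoc]
    have hpat_at : ∀ t : Fin (j - i), pat ⟨i + t.val, by omega⟩ = xor (v t) (w t) := by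
      intro t
      simp only [hpat]
      rw [dif_pos (⟨by omega, by omega⟩ : i ≤ i + t.val ∧ i + t.val < j)]
      have he : (⟨i + t.val - i, by omega⟩ : Fin (j - i)) = t := by
        apply Fin.ext; simp
      rw [he]
    have hcomp : ∀ ω (t : Fin (j - i)),
        Y (E ω) t = xor (ω ⟨i + t.val, by omega⟩) (xor (v t) (w t)) := by
      intro ω t
      simp only [hY, hE]
      rw [hpat_at]
    unfold pr
    refine Fintype.sum_equiv ⟨E, E, fun ω => hinv ω, fun ω => hinv ω⟩ _ _ ?_
    intro ω
    simp only [Equiv.coe_fn_mk]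
    have hiff : (Y ω = v) ↔ (Y (E ω) = w) := by
      constructor
      · intro h; funext t
        have ht := congrFun h t
        simp only [hY] at ht
        rw [hcomp, ht]
        cases v t <;> cases w t <;> decide
      · intro h; funext t
        have ht := congrFun h t
        rw [hcomp] at ht
        simp only [hY]
        revert ht
        cases ω ⟨i + t.val, by omega⟩ <;> cases v t <;> cases w t <;> decide
    simp only [pUnif]
    exact if_congr hiff rfl rfl
  have hsum : ∑ w : Fin (j - i) → Bool, pr (pUnif n) Y w = 1 := by
    unfold pr
    rw [Finset.sum_comm]
    have h0 : ∀ ω : Fin n → Bool,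
        (∑ w : Fin (j - i) → Bool, if Y ω = w then pUnif n ω else 0) = pUnif n ω := by
      intro ω
      simp
    rw [Finset.sum_congr rfl fun ω _ => h0 ω]
    unfold pUnif
    rw [Finset.sum_const, Finset.card_univ]
    simp only [Fintype.card_fun, Fintype.card_bool, Fintype.card_fin, nsmul_eq_mul]
    push_cast
    field_simp
  have hconst : ∑ w : Fin (j - i) → Bool, pr (pUnif n) Y w
      = (2:ℝ)^(j-i) * pr (pUnif n) Y v := by
    rw [Finset.sum_congr rfl fun w _ => key w v]
    rw [Finset.sum_const, Finset.card_univ]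
    simp only [Fintype.card_fun, Fintype.card_bool, Fintype.card_fin, nsmul_eq_mul]
    push_cast
    ring
  have h2 : ((2:ℝ)^(j-i)) ≠ 0 := by positivity
  have hfin := hsum
  rw [hconst] at hfin
  field_simp at hfin ⊢
  linarith

lemma Xv_at_i (n i j : ℕ) (hij : i < j) (ω : Fin n → Bool) :
    Xv n i j i ω = bitv n i ω := by
  unfold Xv; rw [if_neg (by omega), if_pos rfl]

lemma Xv_at_j (n i j : ℕ) (hij : i < j) (ω : Fin n → Bool) :
    Xv n i j j ω = bitv n (j - 1) ω := by
  unfold Xv; rw [if_neg (by omega), if_neg (by omega), if_pos rfl]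

lemma Xv_mid (n i j l : ℕ) (h1 : i < l) (h2 : l < j) (ω : Fin n → Bool) :
    Xv n i j l ω = xor (bitv n (l - 1) ω) (bitv n l ω) := by
  unfold Xv; rw [if_neg (by omega), if_neg (by omega), if_neg (by omega)]

lemma bitv_lt (n k : ℕ) (h : k < n) (ω : Fin n → Bool) :
    bitv n k ω = ω ⟨k, h⟩ := by
  unfold bitv; rw [dif_pos h]

lemma Xv_depends (n i j : ℕ) (hi : 1 ≤ i) (hij : i < j) (hj : j ≤ n)
    (ω ω' : Fin n → Bool) (h : ∀ k : Fin n, i ≤ k.val → k.val < j → ω k = ω' k)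
    (l : ℕ) : Xv n i j l ω = Xv n i j l ω' := by
  have hb : ∀ k : ℕ, i ≤ k → k < j → bitv n k ω = bitv n k ω' := by
    intro k hk1 hk2
    rw [bitv_lt n k (by omega), bitv_lt n k (by omega)]
    exact h ⟨k, by omega⟩ hk1 hk2
  by_cases hc : l < i ∨ j < l
  · unfold Xv; rw [if_pos hc, if_pos hc]
  · push_neg at hc
    by_cases hli : l = i
    · subst hli
      rw [Xv_at_i n l j hij, Xv_at_i n l j hij, hb l le_rfl hij]
    · by_cases hlj : l = j
      · subst hlj
        rw [Xv_at_j n i l hij, Xv_at_j n i l hij, hb (l-1) (by omega) (by omega)]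
      · rw [Xv_mid n i j l (by omega) (by omega), Xv_mid n i j l (by omega) (by omega),
          hb (l-1) (by omega) (by omega), hb l (by omega) (by omega)]

lemma det_bits (n i j m : ℕ) (hi : 1 ≤ i) (hij : i < j) (hj : j ≤ n)
    (ω ω' : Fin n → Bool)
    (hag : ∀ l, i ≤ l → l ≤ j → l ≠ m → Xv n i j l ω = Xv n i j l ω') :
    ∀ k, i ≤ k → k < j → bitv n k ω = bitv n k ω' := by
  have xcancel : ∀ a b c : Bool, xor a b = xor a c → b = c := by decide
  have xcancel' : ∀ a b c : Bool, xor a c = xor b c → a = b := by decide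
  have fwd : ∀ t, i + t < j → i + t < m → bitv n (i + t) ω = bitv n (i + t) ω' := by
    intro t
    induction t with
    | zero =>
      intro h1 h2
      have := hag i le_rfl (le_of_lt hij) (by omega)
      rw [Xv_at_i n i j hij, Xv_at_i n i j hij] at this
      simpa using this
    | succ t ih =>
      intro h1 h2
      have hb := ih (by omega) (by omega)
      have hx := hag (i + t + 1) (by omega) (by omega) (by omega)
      rw [Xv_mid n i j (i + t + 1) (by omega) (by omega),
        Xv_mid n i j (i + t + 1) (by omega) (by omega)] at hx
      have e1 : i + t + 1 - 1 = i + t := by omega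
      rw [e1] at hx
      rw [hb] at hx
      have := xcancel _ _ _ hx
      simpa [show i + (t + 1) = i + t + 1 by omega] using this
  have bwd : ∀ t, i ≤ j - 1 - t → m ≤ j - 1 - t →
      bitv n (j - 1 - t) ω = bitv n (j - 1 - t) ω' := by
    intro t
    induction t with
    | zero =>
      intro h1 h2
      have := hag j (by omega) le_rfl (by omega)
      rw [Xv_at_j n i j hij, Xv_at_j n i j hij] at this
      simpa using this
    | succ t ih =>
      intro h1 h2
      have hb := ih (by omega) (by omega)
      set l := j - 1 - t with hl
      have hx := hag l (by omega) (by omega) (by omega)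
      rw [Xv_mid n i j l (by omega) (by omega),
        Xv_mid n i j l (by omega) (by omega)] at hx
      rw [hb] at hx
      have := xcancel' _ _ _ hx
      have e1 : l - 1 = j - 1 - (t + 1) := by omega
      rwa [e1] at this
  intro k hk1 hk2
  by_cases hkm : k < m
  · have := fwd (k - i) (by omega) (by omega)
    simpa [show i + (k - i) = k by omega] using this
  · have := bwd (j - 1 - k) (by omega) (by omega)
    simpa [show j - 1 - (j - 1 - k) = k by omega] using this

/-- Extend a vector of the `j-i` relevant bits to a full sample point. -/
def extv (n i j : ℕ) (v : Fin (j - i) → Bool) : Fin n → Bool :=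
  fun k => if h : i ≤ k.val ∧ k.val < j then v ⟨k.val - i, by omega⟩ else true

lemma extv_bit (n i j k : ℕ) (hk1 : i ≤ k) (hk2 : k < j) (hj : j ≤ n)
    (v : Fin (j - i) → Bool) :
    bitv n k (extv n i j v) = v ⟨k - i, by omega⟩ := by
  rw [bitv_lt n k (by omega)]
  unfold extv
  rw [dif_pos ⟨hk1, hk2⟩]

lemma extv_agree (n i j : ℕ) (hj : j ≤ n) (ω : Fin n → Bool) (k : Fin n)
    (hk1 : i ≤ k.val) (hk2 : k.val < j) :
    extv n i j (fun t : Fin (j - i) => ω ⟨i + t.val, by omega⟩) k = ω k := by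
  unfold extv
  rw [dif_pos ⟨hk1, hk2⟩]
  show ω ⟨i + (k.val - i), by omega⟩ = ω k
  congr 1
  apply Fin.ext
  simp only
  omega

/-- For the distribution `D_{i,j}`, the joint entropy of `X_1,…,X_n` is
`(j-i) log 2`, and removing any single `X_m` with `i ≤ m ≤ j` leaves the
entropy unchanged. -/
theorem Dij_joint_entropy (n i j : ℕ) (hi : 1 ≤ i) (hij : i < j) (hj : j ≤ n) :
    ent (pUnif n) (fun ω (k : Fin n) => Xv n i j (k.val + 1) ω) =
        ((j - i : ℕ) : ℝ) * Real.log 2 ∧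
      ∀ m, i ≤ m → m ≤ j →
        ent (pUnif n)
            (fun ω (k : {k : Fin n // k.val + 1 ≠ m}) => Xv n i j (k.val.val + 1) ω) =
          ((j - i : ℕ) : ℝ) * Real.log 2 := by
  set Yf : (Fin n → Bool) → (Fin (j - i) → Bool) :=
    fun ω (t : Fin (j - i)) => ω ⟨i + t.val, by omega⟩ with hYf
  have hentY : ent (pUnif n) Yf = ((j - i : ℕ) : ℝ) * Real.log 2 :=
    ent_unif_bits (pUnif n) Yf (fun v => pr_proj n i j hij hj v)
  have hXdep : ∀ (ω : Fin n → Bool) (l : ℕ),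
      Xv n i j l ω = Xv n i j l (extv n i j (Yf ω)) := by
    intro ω l
    apply Xv_depends n i j hi hij hj
    intro k hk1 hk2
    exact (extv_agree n i j hj ω k hk1 hk2).symm
  have hbits : ∀ (v w : Fin (j - i) → Bool) (m : ℕ),
      (∀ l, i ≤ l → l ≤ j → l ≠ m →
        Xv n i j l (extv n i j v) = Xv n i j l (extv n i j w)) → v = w := by
    intro v w m hag
    have hb := det_bits n i j m hi hij hj _ _ hag
    funext t
    have := hb (i + t.val) (by omega) (by omega)
    rw [extv_bit n i j (i + t.val) (by omega) (by omega) hj,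
      extv_bit n i j (i + t.val) (by omega) (by omega) hj] at this
    have he : (⟨i + t.val - i, by omega⟩ : Fin (j - i)) = t := by
      apply Fin.ext; simp
    rwa [he] at this
  constructor
  · set F : (Fin (j - i) → Bool) → (Fin n → Bool) :=
      fun v (k : Fin n) => Xv n i j (k.val + 1) (extv n i j v) with hF
    have hrw : (fun ω (k : Fin n) => Xv n i j (k.val + 1) ω)
        = fun ω => F (Yf ω) := by
      funext ω k
      exact hXdep ω (k.val + 1)
    have hFinj : Function.Injective F := by
      intro v w hvw
      apply hbits v w 0
      intro l hl1 hl2 _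
      have hk := congrFun hvw (⟨l - 1, by omega⟩ : Fin n)
      simp only [hF] at hk
      have e1 : l - 1 + 1 = l := by omega
      rwa [e1] at hk
    rw [hrw, ent_comp_inj (pUnif n) Yf hFinj, hentY]
  · intro m him hmj
    set F : (Fin (j - i) → Bool) → ({k : Fin n // k.val + 1 ≠ m} → Bool) :=
      fun v (k : {k : Fin n // k.val + 1 ≠ m}) =>
        Xv n i j (k.val.val + 1) (extv n i j v) with hF
    have hrw : (fun ω (k : {k : Fin n // k.val + 1 ≠ m}) => Xv n i j (k.val.val + 1) ω)
        = fun ω => F (Yf ω) := by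
      funext ω k
      exact hXdep ω (k.val.val + 1)
    have hFinj : Function.Injective F := by
      intro v w hvw
      apply hbits v w m
      intro l hl1 hl2 hlm
      have hmem : ((⟨l - 1, by omega⟩ : Fin n)).val + 1 ≠ m := by
        simp only
        omega
      have hk := congrFun hvw (⟨⟨l - 1, by omega⟩, hmem⟩ : {k : Fin n // k.val + 1 ≠ m})
      simp only [hF] at hk
      have e1 : l - 1 + 1 = l := by omega
      rwa [e1] at hk
    rw [hrw, ent_comp_inj (pUnif n) Yf hFinj, hentY]
end

section
/- With the distribution D_{i,j} defined via X_i = C_i, X_k = C_{k-1} ⊕ C_k for i<k<j, X_j = C_{j-1} (C's i.i.d. uniform bits, other variables constant), for indices k < l one has I(X_k : X_l | X_{k+1},...,X_{l-1}) = log 2 if (k,l) = (i,j), and 0 otherwise. -/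
open Real BigOperators Finset

/-!
Write `X_m = C_{m-1} ⊕ C_m` for `i ≤ m ≤ j`, with `C_{i-1} = C_j = 0`. Every block
`(X_a, …, X_b)` is then an affine function of the uniform bits, so its fibres are cosets of one
size and its entropy is its rank over `𝔽₂` times `log 2`; a fibre is counted by solving for
the bits on an interval in terms of the others. The only relation among `X_i, …, X_j` is that
their sum vanishes. In `I(X_k : X_l | X_{k+1}, …, X_{l-1})` the four ranks therefore cancel by
inclusion–exclusion, except for the correction this relation makes to the rank of a block
containing all of `X_i, …, X_j`, which survives only for `(k, l) = (i, j)`.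
-/

section Entropy

variable {Ω α : Type*} [Fintype Ω] [DecidableEq α]

theorem pr_const (q : ℝ) (X : Ω → α) (x : α) :
    pr (fun _ => q) X x = #{ω | X ω = x} * q := by
  rw [pr, ← sum_filter, sum_const, nsmul_eq_mul]

theorem sum_pr [Fintype α] (p : Ω → ℝ) (X : Ω → α) : ∑ x, pr p X x = ∑ ω, p ω := by
  simp only [pr]
  rw [sum_comm]
  simp

theorem ent_uniform_of_card_fiber [Fintype α] [Nonempty Ω] (X : Ω → α) {c : ℕ}
    (hc : ∀ ω, #{ω' | X ω' = X ω} = c) :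
    ent (fun _ => (Fintype.card Ω : ℝ)⁻¹) X = Real.log (Fintype.card Ω) - Real.log c := by
  set q : ℝ := (Fintype.card Ω : ℝ)⁻¹
  have hc0 : (c : ℝ) ≠ 0 := by
    obtain ⟨ω⟩ := ‹Nonempty Ω›
    rw [← hc ω, Nat.cast_ne_zero, ← pos_iff_ne_zero, card_pos]
    exact ⟨ω, by simp⟩
  have hpr : ∀ x, pr (fun _ => q) X x = 0 ∨ pr (fun _ => q) X x = c * q := by
    intro x
    rw [pr_const]
    by_cases hx : ∃ ω, X ω = x
    · obtain ⟨ω, rfl⟩ := hx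
      exact .inr (by rw [hc])
    · push Not at hx
      exact .inl (by simp [filter_false_of_mem fun ω _ => hx ω])
  have hterm : ∀ x, pr (fun _ => q) X x * Real.log (pr (fun _ => q) X x)
      = pr (fun _ => q) X x * Real.log (c * q) := by
    intro x
    rcases hpr x with h | h <;> rw [h]
    simp
  rw [ent, sum_congr rfl fun x _ => hterm x, ← sum_mul, sum_pr, sum_const, card_univ,
    nsmul_eq_mul, mul_inv_cancel₀ (by positivity), one_mul,
    Real.log_mul hc0 (by positivity), Real.log_inv]
  ring

theorem ent_pUnif_of_card_fiber [Fintype α] {n r : ℕ} (hr : r ≤ n)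
    (X : (Fin n → Bool) → α) (hc : ∀ ω, #{ω' | X ω' = X ω} = 2 ^ (n - r)) :
    ent (pUnif n) X = r * Real.log 2 := by
  have hp : pUnif n = fun _ => (Fintype.card (Fin n → Bool) : ℝ)⁻¹ := by
    simp only [Fintype.card_fun, Fintype.card_bool, Fintype.card_fin]
    push_cast
    rfl
  rw [hp, ent_uniform_of_card_fiber X hc]
  simp only [Fintype.card_fun, Fintype.card_bool, Fintype.card_fin, Nat.cast_pow,
    Nat.cast_ofNat, Real.log_pow, Nat.cast_sub hr]
  ring

end Entropy

theorem card_filter_forall_eq_of_dependsOn {ι β : Type*} [Fintype ι] [DecidableEq ι]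
    [Fintype β] [Nonempty β] [DecidableEq β] (D : Finset ι) (F : (ι → β) → ι → β)
    (hF : ∀ t, DependsOn (F · t) (↑D)ᶜ) :
    #{ω | ∀ t ∈ D, ω t = F ω t} = Fintype.card β ^ (Fintype.card ι - #D) := by
  let base (u : {t // t ∉ D} → β) : ι → β :=
    fun t => if h : t ∈ D then Classical.arbitrary β else u ⟨t, h⟩
  let extend (u : {t // t ∉ D} → β) : ι → β :=
    fun t => if h : t ∈ D then F (base u) t else u ⟨t, h⟩
  have hF_extend (u : {t // t ∉ D} → β) (t : ι) : F (extend u) t = F (base u) t :=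
    hF t fun s hs => by simp [extend, base, show s ∉ D from hs]
  let e : {ω // ∀ t ∈ D, ω t = F ω t} ≃ ({t // t ∉ D} → β) :=
    { toFun := fun ω s => ω.1 s
      invFun := fun u => ⟨extend u, fun t ht => by simp [extend, ht, hF_extend]⟩
      left_inv := by
        rintro ⟨ω, hω⟩
        ext t
        by_cases ht : t ∈ D
        · have : F (base fun s => ω s) t = F ω t :=
            hF t fun s hs => by simp [base, show s ∉ D from hs]
          simp [extend, ht, this, ← hω t ht]
        · simp [extend, ht]
      right_inv := fun u => by ext s; simp [extend, s.2] }
  rw [← Fintype.card_subtype, Fintype.card_congr e, Fintype.card_fun,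
    Fintype.card_subtype_compl, Fintype.card_coe]

theorem card_filter_forall_Icc_eq_of_dependsOn {n : ℕ} (lo hi : ℕ) (hhi : hi < n)
    (F : (Fin n → Bool) → Fin n → Bool)
    (hF : ∀ t, DependsOn (F · t) {s : Fin n | lo ≤ s.val ∧ s.val ≤ hi}ᶜ) :
    #{ω : Fin n → Bool | ∀ t : Fin n, lo ≤ t.val → t.val ≤ hi → ω t = F ω t}
      = 2 ^ (n - (hi + 1 - lo)) := by
  have hD : (Finset.Icc lo hi).attachFin (fun m hm => by rw [Finset.mem_Icc] at hm; omega)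
      = ({t : Fin n | lo ≤ t.val ∧ t.val ≤ hi} : Finset (Fin n)) := by
    ext t
    simp
  have key := card_filter_forall_eq_of_dependsOn ({t : Fin n | lo ≤ t.val ∧ t.val ≤ hi})
    F fun t => by rw [coe_filter]; simpa using hF t
  simp only [mem_filter, mem_univ, true_and, and_imp] at key
  rw [key, ← hD, card_attachFin, Nat.card_Icc, Fintype.card_bool, Fintype.card_fin]

theorem forall_eq_left_iff_forall_pred_eq {β : Type*} {s : ℕ → β} {p q : ℕ} :
    (∀ m, p < m → m ≤ q → s (m - 1) = s m) ↔ ∀ m, p ≤ m → m ≤ q → s m = s p := by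
  constructor
  · intro h m hpm
    induction m, hpm using Nat.le_induction with
    | base => exact fun _ => rfl
    | succ m hpm ih =>
      intro hm
      rw [← ih (by omega), ← h (m + 1) (by omega) hm, Nat.add_sub_cancel]
  · intro h m hpm hmq
    rw [h m (by omega) hmq, h (m - 1) (by omega) (by omega)]

/-- The bits `C_i, …, C_{j-1}` padded by `C_{i-1} = C_j = 0`, so that `X_m = C_{m-1} ⊕ C_m`
for every `i ≤ m ≤ j`. -/
def padBits (n i j : ℕ) (ω : Fin n → Bool) (t : ℕ) : Bool :=
  if i ≤ t ∧ t < j then bitv n t ω else false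

def XvAgree (n i j a b : ℕ) (ω ω' : Fin n → Bool) : Prop :=
  ∀ m, a ≤ m → m ≤ b → Xv n i j m ω' = Xv n i j m ω

section Fibres

variable {n i j a b : ℕ} {ω ω' : Fin n → Bool}

theorem Xv_of_lt_or_lt {m : ℕ} (h : m < i ∨ j < m) : Xv n i j m ω = true :=
  if_pos h

theorem padBits_of_mem {t : ℕ} (hj : j ≤ n) (hit : i ≤ t) (htj : t < j) :
    padBits n i j ω t = ω ⟨t, by omega⟩ := by
  simp [padBits, hit, htj, bitv, show t < n by omega]

theorem padBits_of_not_mem {t : ℕ} (ht : ¬(i ≤ t ∧ t < j)) :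
    padBits n i j ω t = false :=
  if_neg ht

theorem Xv_eq_xor_padBits (hi : 1 ≤ i) (hij : i < j) {m : ℕ} (him : i ≤ m) (hmj : m ≤ j) :
    Xv n i j m ω = xor (padBits n i j ω (m - 1)) (padBits n i j ω m) := by
  unfold Xv padBits
  split_ifs <;> subst_vars <;> first | omega | simp_all

theorem xvAgree_iff_clip :
    XvAgree n i j a b ω ω' ↔ XvAgree n i j (max a i) (min b j) ω ω' := by
  refine ⟨fun h m ha hb => h m (by omega) (by omega), fun h m ha hb => ?_⟩
  by_cases hout : m < i ∨ j < m
  · rw [Xv_of_lt_or_lt hout, Xv_of_lt_or_lt hout]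
  · exact h m (by omega) (by omega)

theorem xvAgree_iff_left (hab : a ≤ b) :
    XvAgree n i j a b ω ω' ↔
      Xv n i j a ω' = Xv n i j a ω ∧ XvAgree n i j (a + 1) b ω ω' := by
  refine ⟨fun h => ⟨h a le_rfl hab, fun m ha hb => h m (by omega) hb⟩, fun h m ha hb => ?_⟩
  rcases ha.eq_or_lt with rfl | ha
  exacts [h.1, h.2 m ha hb]

theorem xvAgree_iff_right (hab : a ≤ b) :
    XvAgree n i j a b ω ω' ↔
      XvAgree n i j a (b - 1) ω ω' ∧ Xv n i j b ω' = Xv n i j b ω := by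
  refine ⟨fun h => ⟨fun m ha hb => h m ha (by omega), h b hab le_rfl⟩, fun h m ha hb => ?_⟩
  rcases hb.eq_or_lt with rfl | hb
  exacts [h.2, h.1 m ha (by omega)]

theorem xvAgree_iff_padBits_xor_const (hi : 1 ≤ i) (hij : i < j) (hia : i ≤ a)
    (hbj : b ≤ j) :
    XvAgree n i j a b ω ω' ↔ ∀ t, a - 1 ≤ t → t ≤ b →
      xor (padBits n i j ω' t) (padBits n i j ω t)
        = xor (padBits n i j ω' (a - 1)) (padBits n i j ω (a - 1)) := by
  have hxor : ∀ p q r s : Bool, xor p q = xor r s ↔ xor p r = xor q s := by decide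
  rw [← forall_eq_left_iff_forall_pred_eq]
  refine forall_congr' fun m => ⟨fun h hm hmb => ?_, fun h hm hmb => ?_⟩
  · rw [← hxor, ← Xv_eq_xor_padBits hi hij (by omega) (by omega),
      ← Xv_eq_xor_padBits hi hij (by omega) (by omega)]
    exact h (by omega) hmb
  · rw [Xv_eq_xor_padBits hi hij (by omega) (by omega),
      Xv_eq_xor_padBits hi hij (by omega) (by omega), hxor]
    exact h (by omega) hmb

theorem xvAgree_iff_of_anchored (hi : 1 ≤ i) (hij : i < j) (hj : j ≤ n) (hia : i ≤ a)
    (hab : a ≤ b) (hbj : b ≤ j) (hanch : a = i ∨ b = j) :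
    XvAgree n i j a b ω ω' ↔
      ∀ t : Fin n, max (a - 1) i ≤ t.val → t.val ≤ min b (j - 1) → ω' t = ω t := by
  rw [xvAgree_iff_padBits_xor_const hi hij hia hbj]
  set d : ℕ → Bool := fun t => xor (padBits n i j ω' t) (padBits n i j ω t) with hd
  change (∀ t, a - 1 ≤ t → t ≤ b → d t = d (a - 1)) ↔ _
  have hd_out : ∀ t, ¬(i ≤ t ∧ t < j) → d t = false := fun t ht => by
    simp [hd, padBits_of_not_mem ht]
  have hd_in : ∀ t : Fin n, i ≤ t.val → t.val < j → (d t = false ↔ ω' t = ω t) :=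
    fun t hit htj => by simp [hd, padBits_of_mem hj hit htj]
  constructor
  · intro h t h1 h2
    -- the zero padding bit `C_{i-1}` or `C_j` lies in `[a - 1, b]`
    have hend : d (a - 1) = false := by
      rcases hanch with rfl | rfl
      · exact hd_out _ (by omega)
      · rw [← h b (by omega) le_rfl]
        exact hd_out _ (by omega)
    exact (hd_in t (by omega) (by omega)).1 ((h t (by omega) (by omega)).trans hend)
  · intro h
    have hzero : ∀ t, a - 1 ≤ t → t ≤ b → d t = false := by
      intro t h1 h2
      by_cases ht : i ≤ t ∧ t < j
      · obtain ⟨hit, htj⟩ := ht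
        exact (hd_in ⟨t, by omega⟩ hit htj).2 (h _ (by simp only; omega) (by simp only; omega))
      · exact hd_out t ht
    intro t h1 h2
    rw [hzero t h1 h2, hzero (a - 1) le_rfl (by omega)]

theorem xvAgree_iff_of_interior (hi : 1 ≤ i) (hj : j ≤ n) (hia : i < a) (hab : a ≤ b)
    (hbj : b < j) :
    XvAgree n i j a b ω ω' ↔ ∀ t : Fin n, a ≤ t.val → t.val ≤ b →
      ω' t = xor (ω' ⟨a - 1, by omega⟩) (xor (ω ⟨a - 1, by omega⟩) (ω t)) := by
  have hxor : ∀ x y u v : Bool, xor x y = xor u v ↔ x = xor u (xor v y) := by decide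
  rw [xvAgree_iff_padBits_xor_const hi (by omega) hia.le hbj.le,
    padBits_of_mem hj (by omega) (by omega), padBits_of_mem hj (by omega) (by omega)]
  constructor
  · intro h t h1 h2
    have := h t (by omega) h2
    rwa [padBits_of_mem hj (by omega) (by omega), padBits_of_mem hj (by omega) (by omega),
      hxor] at this
  · intro h t h1 h2
    rw [padBits_of_mem hj (by omega) (by omega), padBits_of_mem hj (by omega) (by omega)]
    rcases h1.eq_or_lt with rfl | h1
    · rfl
    · rw [hxor]
      exact h ⟨t, by omega⟩ (by simp only; omega) h2

theorem Xv_between_eq_iff (hj : j ≤ n) {k l : ℕ} :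
    (fun m : {m : Fin n // k < m.val + 1 ∧ m.val + 1 < l} => Xv n i j (m.val.val + 1) ω')
        = (fun m => Xv n i j (m.val.val + 1) ω) ↔ XvAgree n i j (k + 1) (l - 1) ω ω' := by
  refine ⟨fun h m hkm hml => ?_, fun h => funext fun m => h _ (by omega) (by omega)⟩
  by_cases hout : m < i ∨ j < m
  · rw [Xv_of_lt_or_lt hout, Xv_of_lt_or_lt hout]
  · have := congrFun h ⟨⟨m - 1, by omega⟩, by simp only; omega⟩
    rwa [Nat.sub_add_cancel (by omega)] at this

end Fibres

/-- The rank of the block `(X_a, …, X_b)`: the number of non-constant variables in it, less one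
for the single relation `X_i ⊕ ⋯ ⊕ X_j = 0` when the block contains all of `X_i, …, X_j`. -/
def blockRank (i j a b : ℕ) : ℕ :=
  (min b j + 1 - max a i) - if a ≤ i ∧ j ≤ b then 1 else 0

open Classical in
theorem card_xvAgree {n i j : ℕ} (hi : 1 ≤ i) (hij : i < j) (hj : j ≤ n) (a b : ℕ)
    (ω : Fin n → Bool) :
    #{ω' | XvAgree n i j a b ω ω'} = 2 ^ (n - blockRank i j a b) := by
  rw [filter_congr fun ω' _ => xvAgree_iff_clip]
  rcases lt_or_ge (min b j) (max a i) with hba | hab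
  · rw [filter_true_of_mem fun ω' _ m h1 h2 => absurd (h1.trans h2) (by omega), card_univ]
    simp only [Fintype.card_fun, Fintype.card_bool, Fintype.card_fin]
    congr 1
    unfold blockRank
    split_ifs <;> omega
  by_cases hanch : max a i = i ∨ min b j = j
  · rw [filter_congr fun ω' _ => xvAgree_iff_of_anchored hi hij hj (le_max_right a i) hab
      (min_le_right b j) hanch, card_filter_forall_Icc_eq_of_dependsOn _ _ (by omega)
      (fun _ t => ω t) fun t _ _ _ => rfl]
    congr 1
    unfold blockRank
    split_ifs <;> omega
  · have hdep (t : Fin n) : DependsOn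
        (fun ω' : Fin n → Bool => xor (ω' ⟨max a i - 1, by omega⟩)
          (xor (ω ⟨max a i - 1, by omega⟩) (ω t)))
        {s : Fin n | max a i ≤ s ∧ s ≤ min b j}ᶜ := fun x y hxy => by
      dsimp only
      rw [hxy ⟨max a i - 1, by omega⟩ (by simp only [Set.mem_compl_iff, Set.mem_ofPred_eq]; omega)]
    rw [filter_congr fun ω' _ => xvAgree_iff_of_interior hi hj (by omega) hab (by omega),
      card_filter_forall_Icc_eq_of_dependsOn _ _ (by omega) _ hdep]
    congr 1
    unfold blockRank
    split_ifs <;> omega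

theorem blockRank_le {i j : ℕ} (hi : 1 ≤ i) (a b : ℕ) : blockRank i j a b ≤ j := by
  unfold blockRank
  split_ifs <;> omega

theorem blockRank_add_blockRank {i j k l : ℕ} (hij : i < j) (hkl : k < l) :
    blockRank i j k (l - 1) + blockRank i j (k + 1) l
      = blockRank i j k l + blockRank i j (k + 1) (l - 1) + if k = i ∧ l = j then 1 else 0 := by
  unfold blockRank
  split_ifs <;> omega

theorem ent_eq_blockRank {n i j a b : ℕ} {β : Type*} [Fintype β] [DecidableEq β]
    (hi : 1 ≤ i) (hij : i < j) (hj : j ≤ n)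
    (Y : (Fin n → Bool) → β) (hY : ∀ ω ω', Y ω' = Y ω ↔ XvAgree n i j a b ω ω') :
    ent (pUnif n) Y = blockRank i j a b * Real.log 2 := by
  classical
  refine ent_pUnif_of_card_fiber ((blockRank_le hi a b).trans hj) Y fun ω => ?_
  rw [filter_congr fun ω' _ => hY ω ω', card_xvAgree hi hij hj]

theorem Dij_cmi_general (n i j : ℕ) (hi : 1 ≤ i) (hij : i < j) (hj : j ≤ n)
    (k l : ℕ) (hkl : k < l) :
    cmi (pUnif n) (fun ω => Xv n i j k ω) (fun ω => Xv n i j l ω)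
        (fun ω (m : {m : Fin n // k < m.val + 1 ∧ m.val + 1 < l}) =>
          Xv n i j (m.val.val + 1) ω) =
      if k = i ∧ l = j then Real.log 2 else 0 := by
  rw [cmi, ent_eq_blockRank hi hij hj _ fun ω ω' => by
      rw [Prod.ext_iff, Xv_between_eq_iff hj, xvAgree_iff_left (by omega : k ≤ l - 1)],
    ent_eq_blockRank hi hij hj _ fun ω ω' => by
      rw [Prod.ext_iff, Xv_between_eq_iff hj, and_comm,
        xvAgree_iff_right (by omega : k + 1 ≤ l)],
    ent_eq_blockRank hi hij hj _ fun ω ω' => by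
      rw [xvAgree_iff_left hkl.le, xvAgree_iff_right (by omega : k + 1 ≤ l),
        ← Xv_between_eq_iff hj]
      simp only [Prod.mk.injEq]
      tauto,
    ent_eq_blockRank hi hij hj _ fun _ _ => Xv_between_eq_iff hj]
  have hrank := congrArg (fun r : ℕ => (r : ℝ) * Real.log 2) (blockRank_add_blockRank hij hkl)
  push_cast at hrank
  split_ifs at hrank ⊢ <;> linarith

/-- For the distribution `D_{i,j}` and indices `k < l`,
`I(X_k : X_l | X_{k+1},…,X_{l-1})` equals `log 2` if `(k,l) = (i,j)` and `0`
otherwise. -/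
theorem Dij_cmi (n i j : ℕ) (hi : 1 ≤ i) (hij : i < j) (hj : j ≤ n)
    (k l : ℕ) (hk : 1 ≤ k) (hkl : k < l) (hl : l ≤ n) :
    cmi (pUnif n) (fun ω => Xv n i j k ω) (fun ω => Xv n i j l ω)
        (fun ω (m : {m : Fin n // k < m.val + 1 ∧ m.val + 1 < l}) =>
          Xv n i j (m.val.val + 1) ω) =
      if k = i ∧ l = j then Real.log 2 else 0 :=
  Dij_cmi_general n i j hi hij hj k l hkl
end

section
/- For any three finite random variables X, Y, Z, the Shannon inequalities (positivity, monotonicity H(S) ≤ H(T) for S ⊆ T, and sub-modularity H(RS) + H(ST) ≥ H(RST) + H(S)) are generated from the minimal set: H(XYZ | two of them) ≥ 0 for each choice, and I(X_i : X_j | X_S) ≥ 0 for all pairs i<j and S a subset of the remaining variables; in particular for n variables this minimal set has n + n(n-1)2^{n-3} inequalities. -/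
open Real BigOperators Finset

/-- Yeung's minimal generating set of the Shannon cone, n = 3 instance: a set
function `h` on subsets of three variables with `h ∅ = 0` satisfies all
monotonicity and sub-modularity inequalities if and only if it satisfies the
3 elemental monotonicity inequalities `h(Ω \ {i}) ≤ h(Ω)` and the elemental
conditional-mutual-information inequalities
`h({i} ∪ S) + h({j} ∪ S) ≥ h({i,j} ∪ S) + h(S)` (6 of them for n = 3). -/
theorem shannon_cone_minimal_generators_three (h : Finset (Fin 3) → ℝ)
    (h0 : h ∅ = 0) :
    ((∀ S T : Finset (Fin 3), S ⊆ T → h S ≤ h T) ∧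
        ∀ S T : Finset (Fin 3), h (S ∪ T) + h (S ∩ T) ≤ h S + h T)
      ↔ ((∀ i : Fin 3, h (Finset.univ.erase i) ≤ h Finset.univ) ∧
          ∀ i j : Fin 3, i ≠ j → ∀ S : Finset (Fin 3), i ∉ S → j ∉ S →
            h (insert i (insert j S)) + h S ≤ h (insert i S) + h (insert j S)) := by
  constructor
  · rintro ⟨hmono, hsub⟩
    refine ⟨fun i => hmono _ _ (Finset.erase_subset _ _), ?_⟩
    intro i j hij S hiS hjS
    have key := hsub (insert i S) (insert j S)
    have hU : insert i S ∪ insert j S = insert i (insert j S) := by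
      ext x
      simp only [Finset.mem_union, Finset.mem_insert]
      tauto
    have hI : insert i S ∩ insert j S = S := by
      ext x
      simp only [Finset.mem_inter, Finset.mem_insert]
      constructor
      · rintro ⟨(rfl | hx), (rfl | hy)⟩ <;> first | exact absurd rfl hij | assumption
      · intro hx; exact ⟨Or.inr hx, Or.inr hx⟩
    rw [hU, hI] at key
    linarith
  · rintro ⟨hA, hB⟩
    have a0 := hA 0
    have a1 := hA 1
    have a2 := hA 2
    rw [show Finset.univ.erase (0 : Fin 3) = {1,2} by decide,
        show (Finset.univ : Finset (Fin 3)) = {0,1,2} by decide] at a0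
    rw [show Finset.univ.erase (1 : Fin 3) = {0,2} by decide,
        show (Finset.univ : Finset (Fin 3)) = {0,1,2} by decide] at a1
    rw [show Finset.univ.erase (2 : Fin 3) = {0,1} by decide,
        show (Finset.univ : Finset (Fin 3)) = {0,1,2} by decide] at a2
    have b1 : h {0,1} + h ∅ ≤ h {0} + h {1} := by
      have := hB 0 1 (by decide) ∅ (by decide) (by decide)
      rwa [show insert (0:Fin 3) (insert 1 (∅ : Finset (Fin 3))) = {0,1} by decide,
           show insert (0:Fin 3) (∅ : Finset (Fin 3)) = {0} by decide,
           show insert (1:Fin 3) (∅ : Finset (Fin 3)) = {1} by decide] at this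
    have b2 : h {0,1,2} + h {2} ≤ h {0,2} + h {1,2} := by
      have := hB 0 1 (by decide) {2} (by decide) (by decide)
      rwa [show insert (0:Fin 3) (insert 1 ({2} : Finset (Fin 3))) = {0,1,2} by decide,
           show insert (0:Fin 3) ({2} : Finset (Fin 3)) = {0,2} by decide,
           show insert (1:Fin 3) ({2} : Finset (Fin 3)) = {1,2} by decide] at this
    have b3 : h {0,2} + h ∅ ≤ h {0} + h {2} := by
      have := hB 0 2 (by decide) ∅ (by decide) (by decide)
      rwa [show insert (0:Fin 3) (insert 2 (∅ : Finset (Fin 3))) = {0,2} by decide,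
           show insert (0:Fin 3) (∅ : Finset (Fin 3)) = {0} by decide,
           show insert (2:Fin 3) (∅ : Finset (Fin 3)) = {2} by decide] at this
    have b4 : h {0,1,2} + h {1} ≤ h {0,1} + h {1,2} := by
      have := hB 0 2 (by decide) {1} (by decide) (by decide)
      rwa [show insert (0:Fin 3) (insert 2 ({1} : Finset (Fin 3))) = {0,1,2} by decide,
           show insert (0:Fin 3) ({1} : Finset (Fin 3)) = {0,1} by decide,
           show insert (2:Fin 3) ({1} : Finset (Fin 3)) = {1,2} by decide] at this
    have b5 : h {1,2} + h ∅ ≤ h {1} + h {2} := by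
      have := hB 1 2 (by decide) ∅ (by decide) (by decide)
      rwa [show insert (1:Fin 3) (insert 2 (∅ : Finset (Fin 3))) = {1,2} by decide,
           show insert (1:Fin 3) (∅ : Finset (Fin 3)) = {1} by decide,
           show insert (2:Fin 3) (∅ : Finset (Fin 3)) = {2} by decide] at this
    have b6 : h {0,1,2} + h {0} ≤ h {0,1} + h {0,2} := by
      have := hB 1 2 (by decide) {0} (by decide) (by decide)
      rwa [show insert (1:Fin 3) (insert 2 ({0} : Finset (Fin 3))) = {0,1,2} by decide,
           show insert (1:Fin 3) ({0} : Finset (Fin 3)) = {0,1} by decide,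
           show insert (2:Fin 3) ({0} : Finset (Fin 3)) = {0,2} by decide] at this
    have eU1 : (∅ : Finset (Fin 3)) ∪ (∅ : Finset (Fin 3)) = (∅ : Finset (Fin 3)) := by decide
    have eI1 : (∅ : Finset (Fin 3)) ∩ (∅ : Finset (Fin 3)) = (∅ : Finset (Fin 3)) := by decide
    have eU2 : (∅ : Finset (Fin 3)) ∪ ({0} : Finset (Fin 3)) = ({0} : Finset (Fin 3)) := by decide
    have eI2 : (∅ : Finset (Fin 3)) ∩ ({0} : Finset (Fin 3)) = (∅ : Finset (Fin 3)) := by decide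
    have eU3 : (∅ : Finset (Fin 3)) ∪ ({1} : Finset (Fin 3)) = ({1} : Finset (Fin 3)) := by decide
    have eI3 : (∅ : Finset (Fin 3)) ∩ ({1} : Finset (Fin 3)) = (∅ : Finset (Fin 3)) := by decide
    have eU4 : (∅ : Finset (Fin 3)) ∪ ({2} : Finset (Fin 3)) = ({2} : Finset (Fin 3)) := by decide
    have eI4 : (∅ : Finset (Fin 3)) ∩ ({2} : Finset (Fin 3)) = (∅ : Finset (Fin 3)) := by decide
    have eU5 : (∅ : Finset (Fin 3)) ∪ ({0,1} : Finset (Fin 3)) = ({0,1} : Finset (Fin 3)) := by decide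
    have eI5 : (∅ : Finset (Fin 3)) ∩ ({0,1} : Finset (Fin 3)) = (∅ : Finset (Fin 3)) := by decide
    have eU6 : (∅ : Finset (Fin 3)) ∪ ({0,2} : Finset (Fin 3)) = ({0,2} : Finset (Fin 3)) := by decide
    have eI6 : (∅ : Finset (Fin 3)) ∩ ({0,2} : Finset (Fin 3)) = (∅ : Finset (Fin 3)) := by decide
    have eU7 : (∅ : Finset (Fin 3)) ∪ ({1,2} : Finset (Fin 3)) = ({1,2} : Finset (Fin 3)) := by decide
    have eI7 : (∅ : Finset (Fin 3)) ∩ ({1,2} : Finset (Fin 3)) = (∅ : Finset (Fin 3)) := by decide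
    have eU8 : (∅ : Finset (Fin 3)) ∪ ({0,1,2} : Finset (Fin 3)) = ({0,1,2} : Finset (Fin 3)) := by decide
    have eI8 : (∅ : Finset (Fin 3)) ∩ ({0,1,2} : Finset (Fin 3)) = (∅ : Finset (Fin 3)) := by decide
    have eU9 : ({0} : Finset (Fin 3)) ∪ (∅ : Finset (Fin 3)) = ({0} : Finset (Fin 3)) := by decide
    have eI9 : ({0} : Finset (Fin 3)) ∩ (∅ : Finset (Fin 3)) = (∅ : Finset (Fin 3)) := by decide
    have eU10 : ({0} : Finset (Fin 3)) ∪ ({0} : Finset (Fin 3)) = ({0} : Finset (Fin 3)) := by decide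
    have eI10 : ({0} : Finset (Fin 3)) ∩ ({0} : Finset (Fin 3)) = ({0} : Finset (Fin 3)) := by decide
    have eU11 : ({0} : Finset (Fin 3)) ∪ ({1} : Finset (Fin 3)) = ({0,1} : Finset (Fin 3)) := by decide
    have eI11 : ({0} : Finset (Fin 3)) ∩ ({1} : Finset (Fin 3)) = (∅ : Finset (Fin 3)) := by decide
    have eU12 : ({0} : Finset (Fin 3)) ∪ ({2} : Finset (Fin 3)) = ({0,2} : Finset (Fin 3)) := by decide
    have eI12 : ({0} : Finset (Fin 3)) ∩ ({2} : Finset (Fin 3)) = (∅ : Finset (Fin 3)) := by decide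
    have eU13 : ({0} : Finset (Fin 3)) ∪ ({0,1} : Finset (Fin 3)) = ({0,1} : Finset (Fin 3)) := by decide
    have eI13 : ({0} : Finset (Fin 3)) ∩ ({0,1} : Finset (Fin 3)) = ({0} : Finset (Fin 3)) := by decide
    have eU14 : ({0} : Finset (Fin 3)) ∪ ({0,2} : Finset (Fin 3)) = ({0,2} : Finset (Fin 3)) := by decide
    have eI14 : ({0} : Finset (Fin 3)) ∩ ({0,2} : Finset (Fin 3)) = ({0} : Finset (Fin 3)) := by decide
    have eU15 : ({0} : Finset (Fin 3)) ∪ ({1,2} : Finset (Fin 3)) = ({0,1,2} : Finset (Fin 3)) := by decide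
    have eI15 : ({0} : Finset (Fin 3)) ∩ ({1,2} : Finset (Fin 3)) = (∅ : Finset (Fin 3)) := by decide
    have eU16 : ({0} : Finset (Fin 3)) ∪ ({0,1,2} : Finset (Fin 3)) = ({0,1,2} : Finset (Fin 3)) := by decide
    have eI16 : ({0} : Finset (Fin 3)) ∩ ({0,1,2} : Finset (Fin 3)) = ({0} : Finset (Fin 3)) := by decide
    have eU17 : ({1} : Finset (Fin 3)) ∪ (∅ : Finset (Fin 3)) = ({1} : Finset (Fin 3)) := by decide
    have eI17 : ({1} : Finset (Fin 3)) ∩ (∅ : Finset (Fin 3)) = (∅ : Finset (Fin 3)) := by decide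
    have eU18 : ({1} : Finset (Fin 3)) ∪ ({0} : Finset (Fin 3)) = ({0,1} : Finset (Fin 3)) := by decide
    have eI18 : ({1} : Finset (Fin 3)) ∩ ({0} : Finset (Fin 3)) = (∅ : Finset (Fin 3)) := by decide
    have eU19 : ({1} : Finset (Fin 3)) ∪ ({1} : Finset (Fin 3)) = ({1} : Finset (Fin 3)) := by decide
    have eI19 : ({1} : Finset (Fin 3)) ∩ ({1} : Finset (Fin 3)) = ({1} : Finset (Fin 3)) := by decide
    have eU20 : ({1} : Finset (Fin 3)) ∪ ({2} : Finset (Fin 3)) = ({1,2} : Finset (Fin 3)) := by decide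
    have eI20 : ({1} : Finset (Fin 3)) ∩ ({2} : Finset (Fin 3)) = (∅ : Finset (Fin 3)) := by decide
    have eU21 : ({1} : Finset (Fin 3)) ∪ ({0,1} : Finset (Fin 3)) = ({0,1} : Finset (Fin 3)) := by decide
    have eI21 : ({1} : Finset (Fin 3)) ∩ ({0,1} : Finset (Fin 3)) = ({1} : Finset (Fin 3)) := by decide
    have eU22 : ({1} : Finset (Fin 3)) ∪ ({0,2} : Finset (Fin 3)) = ({0,1,2} : Finset (Fin 3)) := by decide
    have eI22 : ({1} : Finset (Fin 3)) ∩ ({0,2} : Finset (Fin 3)) = (∅ : Finset (Fin 3)) := by decide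
    have eU23 : ({1} : Finset (Fin 3)) ∪ ({1,2} : Finset (Fin 3)) = ({1,2} : Finset (Fin 3)) := by decide
    have eI23 : ({1} : Finset (Fin 3)) ∩ ({1,2} : Finset (Fin 3)) = ({1} : Finset (Fin 3)) := by decide
    have eU24 : ({1} : Finset (Fin 3)) ∪ ({0,1,2} : Finset (Fin 3)) = ({0,1,2} : Finset (Fin 3)) := by decide
    have eI24 : ({1} : Finset (Fin 3)) ∩ ({0,1,2} : Finset (Fin 3)) = ({1} : Finset (Fin 3)) := by decide
    have eU25 : ({2} : Finset (Fin 3)) ∪ (∅ : Finset (Fin 3)) = ({2} : Finset (Fin 3)) := by decide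
    have eI25 : ({2} : Finset (Fin 3)) ∩ (∅ : Finset (Fin 3)) = (∅ : Finset (Fin 3)) := by decide
    have eU26 : ({2} : Finset (Fin 3)) ∪ ({0} : Finset (Fin 3)) = ({0,2} : Finset (Fin 3)) := by decide
    have eI26 : ({2} : Finset (Fin 3)) ∩ ({0} : Finset (Fin 3)) = (∅ : Finset (Fin 3)) := by decide
    have eU27 : ({2} : Finset (Fin 3)) ∪ ({1} : Finset (Fin 3)) = ({1,2} : Finset (Fin 3)) := by decide
    have eI27 : ({2} : Finset (Fin 3)) ∩ ({1} : Finset (Fin 3)) = (∅ : Finset (Fin 3)) := by decide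
    have eU28 : ({2} : Finset (Fin 3)) ∪ ({2} : Finset (Fin 3)) = ({2} : Finset (Fin 3)) := by decide
    have eI28 : ({2} : Finset (Fin 3)) ∩ ({2} : Finset (Fin 3)) = ({2} : Finset (Fin 3)) := by decide
    have eU29 : ({2} : Finset (Fin 3)) ∪ ({0,1} : Finset (Fin 3)) = ({0,1,2} : Finset (Fin 3)) := by decide
    have eI29 : ({2} : Finset (Fin 3)) ∩ ({0,1} : Finset (Fin 3)) = (∅ : Finset (Fin 3)) := by decide
    have eU30 : ({2} : Finset (Fin 3)) ∪ ({0,2} : Finset (Fin 3)) = ({0,2} : Finset (Fin 3)) := by decide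
    have eI30 : ({2} : Finset (Fin 3)) ∩ ({0,2} : Finset (Fin 3)) = ({2} : Finset (Fin 3)) := by decide
    have eU31 : ({2} : Finset (Fin 3)) ∪ ({1,2} : Finset (Fin 3)) = ({1,2} : Finset (Fin 3)) := by decide
    have eI31 : ({2} : Finset (Fin 3)) ∩ ({1,2} : Finset (Fin 3)) = ({2} : Finset (Fin 3)) := by decide
    have eU32 : ({2} : Finset (Fin 3)) ∪ ({0,1,2} : Finset (Fin 3)) = ({0,1,2} : Finset (Fin 3)) := by decide
    have eI32 : ({2} : Finset (Fin 3)) ∩ ({0,1,2} : Finset (Fin 3)) = ({2} : Finset (Fin 3)) := by decide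
    have eU33 : ({0,1} : Finset (Fin 3)) ∪ (∅ : Finset (Fin 3)) = ({0,1} : Finset (Fin 3)) := by decide
    have eI33 : ({0,1} : Finset (Fin 3)) ∩ (∅ : Finset (Fin 3)) = (∅ : Finset (Fin 3)) := by decide
    have eU34 : ({0,1} : Finset (Fin 3)) ∪ ({0} : Finset (Fin 3)) = ({0,1} : Finset (Fin 3)) := by decide
    have eI34 : ({0,1} : Finset (Fin 3)) ∩ ({0} : Finset (Fin 3)) = ({0} : Finset (Fin 3)) := by decide
    have eU35 : ({0,1} : Finset (Fin 3)) ∪ ({1} : Finset (Fin 3)) = ({0,1} : Finset (Fin 3)) := by decide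
    have eI35 : ({0,1} : Finset (Fin 3)) ∩ ({1} : Finset (Fin 3)) = ({1} : Finset (Fin 3)) := by decide
    have eU36 : ({0,1} : Finset (Fin 3)) ∪ ({2} : Finset (Fin 3)) = ({0,1,2} : Finset (Fin 3)) := by decide
    have eI36 : ({0,1} : Finset (Fin 3)) ∩ ({2} : Finset (Fin 3)) = (∅ : Finset (Fin 3)) := by decide
    have eU37 : ({0,1} : Finset (Fin 3)) ∪ ({0,1} : Finset (Fin 3)) = ({0,1} : Finset (Fin 3)) := by decide
    have eI37 : ({0,1} : Finset (Fin 3)) ∩ ({0,1} : Finset (Fin 3)) = ({0,1} : Finset (Fin 3)) := by decide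
    have eU38 : ({0,1} : Finset (Fin 3)) ∪ ({0,2} : Finset (Fin 3)) = ({0,1,2} : Finset (Fin 3)) := by decide
    have eI38 : ({0,1} : Finset (Fin 3)) ∩ ({0,2} : Finset (Fin 3)) = ({0} : Finset (Fin 3)) := by decide
    have eU39 : ({0,1} : Finset (Fin 3)) ∪ ({1,2} : Finset (Fin 3)) = ({0,1,2} : Finset (Fin 3)) := by decide
    have eI39 : ({0,1} : Finset (Fin 3)) ∩ ({1,2} : Finset (Fin 3)) = ({1} : Finset (Fin 3)) := by decide
    have eU40 : ({0,1} : Finset (Fin 3)) ∪ ({0,1,2} : Finset (Fin 3)) = ({0,1,2} : Finset (Fin 3)) := by decide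
    have eI40 : ({0,1} : Finset (Fin 3)) ∩ ({0,1,2} : Finset (Fin 3)) = ({0,1} : Finset (Fin 3)) := by decide
    have eU41 : ({0,2} : Finset (Fin 3)) ∪ (∅ : Finset (Fin 3)) = ({0,2} : Finset (Fin 3)) := by decide
    have eI41 : ({0,2} : Finset (Fin 3)) ∩ (∅ : Finset (Fin 3)) = (∅ : Finset (Fin 3)) := by decide
    have eU42 : ({0,2} : Finset (Fin 3)) ∪ ({0} : Finset (Fin 3)) = ({0,2} : Finset (Fin 3)) := by decide
    have eI42 : ({0,2} : Finset (Fin 3)) ∩ ({0} : Finset (Fin 3)) = ({0} : Finset (Fin 3)) := by decide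
    have eU43 : ({0,2} : Finset (Fin 3)) ∪ ({1} : Finset (Fin 3)) = ({0,1,2} : Finset (Fin 3)) := by decide
    have eI43 : ({0,2} : Finset (Fin 3)) ∩ ({1} : Finset (Fin 3)) = (∅ : Finset (Fin 3)) := by decide
    have eU44 : ({0,2} : Finset (Fin 3)) ∪ ({2} : Finset (Fin 3)) = ({0,2} : Finset (Fin 3)) := by decide
    have eI44 : ({0,2} : Finset (Fin 3)) ∩ ({2} : Finset (Fin 3)) = ({2} : Finset (Fin 3)) := by decide
    have eU45 : ({0,2} : Finset (Fin 3)) ∪ ({0,1} : Finset (Fin 3)) = ({0,1,2} : Finset (Fin 3)) := by decide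
    have eI45 : ({0,2} : Finset (Fin 3)) ∩ ({0,1} : Finset (Fin 3)) = ({0} : Finset (Fin 3)) := by decide
    have eU46 : ({0,2} : Finset (Fin 3)) ∪ ({0,2} : Finset (Fin 3)) = ({0,2} : Finset (Fin 3)) := by decide
    have eI46 : ({0,2} : Finset (Fin 3)) ∩ ({0,2} : Finset (Fin 3)) = ({0,2} : Finset (Fin 3)) := by decide
    have eU47 : ({0,2} : Finset (Fin 3)) ∪ ({1,2} : Finset (Fin 3)) = ({0,1,2} : Finset (Fin 3)) := by decide
    have eI47 : ({0,2} : Finset (Fin 3)) ∩ ({1,2} : Finset (Fin 3)) = ({2} : Finset (Fin 3)) := by decide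
    have eU48 : ({0,2} : Finset (Fin 3)) ∪ ({0,1,2} : Finset (Fin 3)) = ({0,1,2} : Finset (Fin 3)) := by decide
    have eI48 : ({0,2} : Finset (Fin 3)) ∩ ({0,1,2} : Finset (Fin 3)) = ({0,2} : Finset (Fin 3)) := by decide
    have eU49 : ({1,2} : Finset (Fin 3)) ∪ (∅ : Finset (Fin 3)) = ({1,2} : Finset (Fin 3)) := by decide
    have eI49 : ({1,2} : Finset (Fin 3)) ∩ (∅ : Finset (Fin 3)) = (∅ : Finset (Fin 3)) := by decide
    have eU50 : ({1,2} : Finset (Fin 3)) ∪ ({0} : Finset (Fin 3)) = ({0,1,2} : Finset (Fin 3)) := by decide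
    have eI50 : ({1,2} : Finset (Fin 3)) ∩ ({0} : Finset (Fin 3)) = (∅ : Finset (Fin 3)) := by decide
    have eU51 : ({1,2} : Finset (Fin 3)) ∪ ({1} : Finset (Fin 3)) = ({1,2} : Finset (Fin 3)) := by decide
    have eI51 : ({1,2} : Finset (Fin 3)) ∩ ({1} : Finset (Fin 3)) = ({1} : Finset (Fin 3)) := by decide
    have eU52 : ({1,2} : Finset (Fin 3)) ∪ ({2} : Finset (Fin 3)) = ({1,2} : Finset (Fin 3)) := by decide
    have eI52 : ({1,2} : Finset (Fin 3)) ∩ ({2} : Finset (Fin 3)) = ({2} : Finset (Fin 3)) := by decide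
    have eU53 : ({1,2} : Finset (Fin 3)) ∪ ({0,1} : Finset (Fin 3)) = ({0,1,2} : Finset (Fin 3)) := by decide
    have eI53 : ({1,2} : Finset (Fin 3)) ∩ ({0,1} : Finset (Fin 3)) = ({1} : Finset (Fin 3)) := by decide
    have eU54 : ({1,2} : Finset (Fin 3)) ∪ ({0,2} : Finset (Fin 3)) = ({0,1,2} : Finset (Fin 3)) := by decide
    have eI54 : ({1,2} : Finset (Fin 3)) ∩ ({0,2} : Finset (Fin 3)) = ({2} : Finset (Fin 3)) := by decide
    have eU55 : ({1,2} : Finset (Fin 3)) ∪ ({1,2} : Finset (Fin 3)) = ({1,2} : Finset (Fin 3)) := by decide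
    have eI55 : ({1,2} : Finset (Fin 3)) ∩ ({1,2} : Finset (Fin 3)) = ({1,2} : Finset (Fin 3)) := by decide
    have eU56 : ({1,2} : Finset (Fin 3)) ∪ ({0,1,2} : Finset (Fin 3)) = ({0,1,2} : Finset (Fin 3)) := by decide
    have eI56 : ({1,2} : Finset (Fin 3)) ∩ ({0,1,2} : Finset (Fin 3)) = ({1,2} : Finset (Fin 3)) := by decide
    have eU57 : ({0,1,2} : Finset (Fin 3)) ∪ (∅ : Finset (Fin 3)) = ({0,1,2} : Finset (Fin 3)) := by decide
    have eI57 : ({0,1,2} : Finset (Fin 3)) ∩ (∅ : Finset (Fin 3)) = (∅ : Finset (Fin 3)) := by decide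
    have eU58 : ({0,1,2} : Finset (Fin 3)) ∪ ({0} : Finset (Fin 3)) = ({0,1,2} : Finset (Fin 3)) := by decide
    have eI58 : ({0,1,2} : Finset (Fin 3)) ∩ ({0} : Finset (Fin 3)) = ({0} : Finset (Fin 3)) := by decide
    have eU59 : ({0,1,2} : Finset (Fin 3)) ∪ ({1} : Finset (Fin 3)) = ({0,1,2} : Finset (Fin 3)) := by decide
    have eI59 : ({0,1,2} : Finset (Fin 3)) ∩ ({1} : Finset (Fin 3)) = ({1} : Finset (Fin 3)) := by decide
    have eU60 : ({0,1,2} : Finset (Fin 3)) ∪ ({2} : Finset (Fin 3)) = ({0,1,2} : Finset (Fin 3)) := by decide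
    have eI60 : ({0,1,2} : Finset (Fin 3)) ∩ ({2} : Finset (Fin 3)) = ({2} : Finset (Fin 3)) := by decide
    have eU61 : ({0,1,2} : Finset (Fin 3)) ∪ ({0,1} : Finset (Fin 3)) = ({0,1,2} : Finset (Fin 3)) := by decide
    have eI61 : ({0,1,2} : Finset (Fin 3)) ∩ ({0,1} : Finset (Fin 3)) = ({0,1} : Finset (Fin 3)) := by decide
    have eU62 : ({0,1,2} : Finset (Fin 3)) ∪ ({0,2} : Finset (Fin 3)) = ({0,1,2} : Finset (Fin 3)) := by decide
    have eI62 : ({0,1,2} : Finset (Fin 3)) ∩ ({0,2} : Finset (Fin 3)) = ({0,2} : Finset (Fin 3)) := by decide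
    have eU63 : ({0,1,2} : Finset (Fin 3)) ∪ ({1,2} : Finset (Fin 3)) = ({0,1,2} : Finset (Fin 3)) := by decide
    have eI63 : ({0,1,2} : Finset (Fin 3)) ∩ ({1,2} : Finset (Fin 3)) = ({1,2} : Finset (Fin 3)) := by decide
    have eU64 : ({0,1,2} : Finset (Fin 3)) ∪ ({0,1,2} : Finset (Fin 3)) = ({0,1,2} : Finset (Fin 3)) := by decide
    have eI64 : ({0,1,2} : Finset (Fin 3)) ∩ ({0,1,2} : Finset (Fin 3)) = ({0,1,2} : Finset (Fin 3)) := by decide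
    have hcases : ∀ S : Finset (Fin 3), S = ∅ ∨ S = {0} ∨ S = {1} ∨ S = {2} ∨
        S = {0,1} ∨ S = {0,2} ∨ S = {1,2} ∨ S = {0,1,2} := by decide
    constructor
    · intro S T
      rcases hcases S with rfl|rfl|rfl|rfl|rfl|rfl|rfl|rfl <;>
        rcases hcases T with rfl|rfl|rfl|rfl|rfl|rfl|rfl|rfl <;>
        intro hst <;>
        first
          | exact absurd hst (by decide)
          | linarith
    · intro S T
      rcases hcases S with rfl|rfl|rfl|rfl|rfl|rfl|rfl|rfl <;>
        rcases hcases T with rfl|rfl|rfl|rfl|rfl|rfl|rfl|rfl <;>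
        simp only [eU1, eI1, eU2, eI2, eU3, eI3, eU4, eI4, eU5, eI5, eU6, eI6, eU7, eI7, eU8, eI8, eU9, eI9, eU10, eI10, eU11, eI11, eU12, eI12, eU13, eI13, eU14, eI14, eU15, eI15, eU16, eI16, eU17, eI17, eU18, eI18, eU19, eI19, eU20, eI20, eU21, eI21, eU22, eI22, eU23, eI23, eU24, eI24, eU25, eI25, eU26, eI26, eU27, eI27, eU28, eI28, eU29, eI29, eU30, eI30, eU31, eI31, eU32, eI32, eU33, eI33, eU34, eI34, eU35, eI35, eU36, eI36, eU37, eI37, eU38, eI38, eU39, eI39, eU40, eI40, eU41, eI41, eU42, eI42, eU43, eI43, eU44, eI44, eU45, eI45, eU46, eI46, eU47, eI47, eU48, eI48, eU49, eI49, eU50, eI50, eU51, eI51, eU52, eI52, eU53, eI53, eU54, eI54, eU55, eI55, eU56, eI56, eU57, eI57, eU58, eI58, eU59, eI59, eU60, eI60, eU61, eI61, eU62, eI62, eU63, eI63, eU64, eI64] <;>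
        linarith
end
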